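/- arXiv:1303.2303 — 2 statements merged into one kernel-verified Lean document; each statement's English description precedes it below -/
import Mathlib

section
/- Let L ⊆ ℤⁿ be a lattice, I = I_L, and F an I-fiber. Then F is a Markov I-fiber (i.e., there exists a Markov basis S of I and a binomial B ∈ S with F_B ≡_I F) if and only if I_{<F̄} ≠ I_{≤F̄}. -/
open MvPolynomial

noncomputable section

/-- The integer vector associated to a natural exponent vector. -/
def natVec {ι : Type*} (u : ι →₀ ℕ) : ι → ℤ := fun i => (u i : ℤ)

/-- The lattice ideal `I_L` of a lattice `L ⊆ ℤ^ι` in `k[x_i : i ∈ ι]`. -/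
def latticeIdeal (k : Type*) [Field k] {ι : Type*} (L : Submodule ℤ (ι → ℤ)) :
    Ideal (MvPolynomial ι k) :=
  Ideal.span {f | ∃ u v : ι →₀ ℕ, natVec u - natVec v ∈ L ∧
    f = monomial u (1 : k) - monomial v 1}

/-- `f` is a binomial `x^u - x^v` belonging to the lattice ideal `I_L`. -/
def IsLatticeBinomial (k : Type*) [Field k] {ι : Type*} (L : Submodule ℤ (ι → ℤ))
    (f : MvPolynomial ι k) : Prop :=
  ∃ u v : ι →₀ ℕ, natVec u - natVec v ∈ L ∧ f = monomial u (1 : k) - monomial v 1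

/-- The `I_L`-fiber of `u` : all exponent vectors `v` with `v - u ∈ L`. -/
def fiber {ι : Type*} (L : Submodule ℤ (ι → ℤ)) (u : ι →₀ ℕ) : Set (ι →₀ ℕ) :=
  {v | natVec v - natVec u ∈ L}

/-- `L⁺ = L ∩ ℕ^ι`. -/
def Lplus {ι : Type*} (L : Submodule ℤ (ι → ℤ)) : Set (ι → ℤ) :=
  {w | w ∈ L ∧ ∀ i, 0 ≤ w i}

/-- `L_pure`, the subgroup of `L` generated by `L⁺`. -/
def Lpure {ι : Type*} (L : Submodule ℤ (ι → ℤ)) : Submodule ℤ (ι → ℤ) :=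
  Submodule.span ℤ (Lplus L)

/-- `σ_L`, the union of the supports of elements of `L⁺`. -/
def sigmaL {ι : Type*} (L : Submodule ℤ (ι → ℤ)) : Set ι :=
  {i | ∃ w ∈ Lplus L, w i ≠ 0}

/-- `F̄ ≤_I Ḡ` : some translate of `F` is contained in `G`. -/
def fiberLE {ι : Type*} (F G : Set (ι →₀ ℕ)) : Prop :=
  ∃ t : ι →₀ ℕ, (fun v => t + v) '' F ⊆ G

/-- `F ≡_I G` : equivalence of fibers. -/
def fiberEquiv {ι : Type*} (F G : Set (ι →₀ ℕ)) : Prop :=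
  fiberLE F G ∧ fiberLE G F

/-- `F̄ <_I Ḡ`. -/
def fiberLT {ι : Type*} (F G : Set (ι →₀ ℕ)) : Prop :=
  fiberLE F G ∧ ¬ fiberEquiv F G

/-- The ideal `I_{<F̄}` generated by binomials of `I_L` whose fiber class is `<_I F̄`. -/
def idealLT (k : Type*) [Field k] {ι : Type*} (L : Submodule ℤ (ι → ℤ))
    (F : Set (ι →₀ ℕ)) : Ideal (MvPolynomial ι k) :=
  Ideal.span {f | ∃ u v : ι →₀ ℕ, natVec u - natVec v ∈ L ∧
    f = monomial u (1 : k) - monomial v 1 ∧ fiberLT (fiber L u) F}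

/-- The ideal `I_{≤F̄}` generated by binomials of `I_L` whose fiber class is `≤_I F̄`. -/
def idealLE (k : Type*) [Field k] {ι : Type*} (L : Submodule ℤ (ι → ℤ))
    (F : Set (ι →₀ ℕ)) : Ideal (MvPolynomial ι k) :=
  Ideal.span {f | ∃ u v : ι →₀ ℕ, natVec u - natVec v ∈ L ∧
    f = monomial u (1 : k) - monomial v 1 ∧ fiberLE (fiber L u) F}

/-- `μ(I_L)` : the least cardinality of a binomial generating set of `I_L`. -/
def muIdeal (k : Type*) [Field k] {ι : Type*} (L : Submodule ℤ (ι → ℤ)) : ℕ :=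
  sInf {m | ∃ S : Finset (MvPolynomial ι k), S.card = m ∧
    (∀ f ∈ S, IsLatticeBinomial k L f) ∧
    Ideal.span (S : Set (MvPolynomial ι k)) = latticeIdeal k L}

/-- A Markov basis of `I_L` : a binomial generating set of least cardinality `μ(I_L)`. -/
def IsMarkovBasis (k : Type*) [Field k] {ι : Type*} (L : Submodule ℤ (ι → ℤ))
    (S : Finset (MvPolynomial ι k)) : Prop :=
  (∀ f ∈ S, IsLatticeBinomial k L f) ∧
  Ideal.span (S : Set (MvPolynomial ι k)) = latticeIdeal k L ∧
  S.card = muIdeal k L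

/-- `u` is an `L`-primitive vector : `u ≠ 0`, `u ∈ L`, and whenever `q • u ∈ L` for
a rational `q`, then `q` is an integer. -/
def IsLPrimitive {ι : Type*} (L : Submodule ℤ (ι → ℤ)) (u : ι → ℤ) : Prop :=
  u ≠ 0 ∧ u ∈ L ∧ ∀ (q : ℚ) (w : ι → ℤ), w ∈ L →
    (∀ i, (w i : ℚ) = q * (u i : ℚ)) → ∃ m : ℤ, q = (m : ℚ)

/-- Projection onto the coordinates in `σ_L`. -/
def projSigma {n : ℕ} (L : Submodule ℤ (Fin n → ℤ)) :
    (Fin n → ℤ) →ₗ[ℤ] ({i : Fin n // i ∈ sigmaL L} → ℤ) :=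
  LinearMap.pi fun j => LinearMap.proj j.1

/-- Projection onto the coordinates outside `σ_L` (giving `u ↦ u^σ`). -/
def projCompl {n : ℕ} (L : Submodule ℤ (Fin n → ℤ)) :
    (Fin n → ℤ) →ₗ[ℤ] ({i : Fin n // i ∉ sigmaL L} → ℤ) :=
  LinearMap.pi fun j => LinearMap.proj j.1

/-- An indispensable binomial: it appears, up to a constant multiple, in every Markov basis. -/
def IsIndispensableBinomial (k : Type*) [Field k] {ι : Type*} (L : Submodule ℤ (ι → ℤ))
    (f : MvPolynomial ι k) : Prop :=
  ∀ S : Finset (MvPolynomial ι k), IsMarkovBasis k L S → ∃ c : k, c ≠ 0 ∧ c • f ∈ S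

/-- An indispensable monomial: every Markov basis contains a binomial having it as a term. -/
def IsIndispensableMonomial (k : Type*) [Field k] {ι : Type*} (L : Submodule ℤ (ι → ℤ))
    (u : ι →₀ ℕ) : Prop :=
  ∀ S : Finset (MvPolynomial ι k), IsMarkovBasis k L S → ∃ f ∈ S, ∃ v : ι →₀ ℕ,
    f = monomial u (1 : k) - monomial v 1 ∨ f = monomial v (1 : k) - monomial u 1

/-!
If lattice binomials `S` generate `x^u - x^v`, then `u` and `v` are related by the additive
congruence generated by the moves `a ~ b` for `x^a - x^b ∈ S`, because the induced ring map
`k[ℕⁿ] → k[ℕⁿ/~]` kills `⟨S⟩`. A chain of moves from `u` stays in the fiber of `u` and only uses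
binomials whose fibers lie below it, so `x^u - x^v` is generated by the elements of `S` with
fiber `≤_I` that of `u`. Hence, for any binomial generating set `S`, `I_{≤F̄}` and `I_{<F̄}` are
generated by the elements of `S` with fiber `≤_I F̄`, resp. `<_I F̄`. If a Markov basis contains a
binomial `f` with `F_f ≡_I F` and `I_{<F̄} = I_{≤F̄}`, then `f` lies in the ideal of the other
elements, against minimality; if no element of a Markov basis has fiber `≡_I F`, the two
generating sets coincide.
-/

section Fibers

variable {ι : Type*} {L : Submodule ℤ (ι → ℤ)}

lemma natVec_add (a b : ι →₀ ℕ) : natVec (a + b) = natVec a + natVec b := by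
  funext i; simp [natVec]

lemma fiber_eq_of_sub_mem {u v : ι →₀ ℕ} (h : natVec u - natVec v ∈ L) :
    fiber L u = fiber L v := by
  ext z
  simp only [fiber, Set.mem_ofPred_eq]
  constructor <;> intro hz
  · simpa using L.add_mem hz h
  · simpa using L.sub_mem hz h

lemma fiberLE.trans {F G H : Set (ι →₀ ℕ)} (hFG : fiberLE F G) (hGH : fiberLE G H) :
    fiberLE F H := by
  obtain ⟨t, ht⟩ := hFG
  obtain ⟨s, hs⟩ := hGH
  refine ⟨s + t, ?_⟩
  rintro _ ⟨x, hx, rfl⟩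
  simpa [add_assoc] using hs ⟨t + x, ht ⟨x, hx, rfl⟩, rfl⟩

lemma fiberLE_fiber_add (L : Submodule ℤ (ι → ℤ)) (t a : ι →₀ ℕ) :
    fiberLE (fiber L a) (fiber L (t + a)) := by
  refine ⟨t, ?_⟩
  rintro _ ⟨x, hx, rfl⟩
  simpa [fiber, natVec_add] using hx

def fiberCon (L : Submodule ℤ (ι → ℤ)) : AddCon (ι →₀ ℕ) where
  r u v := natVec u - natVec v ∈ L
  iseqv :=
    ⟨fun u => by simp, fun h => by simpa using L.neg_mem h,
      fun h h' => by simpa using L.add_mem h h'⟩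
  add' {a b c d} h h' := by
    simpa [natVec_add, add_sub_add_comm] using L.add_mem h h'

end Fibers

section Moves

variable {k : Type*} [Field k] {ι : Type*} {L : Submodule ℤ (ι → ℤ)}

def moveRel (L : Submodule ℤ (ι → ℤ)) (S : Set (MvPolynomial ι k)) (u v : ι →₀ ℕ) : Prop :=
  natVec u - natVec v ∈ L ∧ monomial u (1 : k) - monomial v 1 ∈ S

def binomialsWith (L : Submodule ℤ (ι → ℤ)) (S : Set (MvPolynomial ι k))
    (P : Set (ι →₀ ℕ) → Prop) : Set (MvPolynomial ι k) :=
  {g | g ∈ S ∧ ∃ a b : ι →₀ ℕ, natVec a - natVec b ∈ L ∧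
    g = monomial a (1 : k) - monomial b 1 ∧ P (fiber L a)}

lemma addConGen_moveRel_le_fiberCon (S : Set (MvPolynomial ι k)) :
    addConGen (moveRel L S) ≤ fiberCon L :=
  AddCon.addConGen_le.2 fun _ _ h => h.1

lemma sub_mem_span_binomialsWith_of_addConGen {S : Set (MvPolynomial ι k)}
    {P : Set (ι →₀ ℕ) → Prop} (hP : ∀ G H, fiberLE G H → P H → P G) {u v : ι →₀ ℕ}
    (huv : AddConGen.Rel (moveRel L S) u v) (hu : P (fiber L u)) :
    monomial u (1 : k) - monomial v 1 ∈ Ideal.span (binomialsWith L S P) := by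
  induction huv with
  | of a b hab => exact Ideal.subset_span ⟨hab.2, a, b, hab.1, rfl, hu⟩
  | refl => simp
  | symm hab ih =>
    rw [← neg_sub]
    refine neg_mem (ih ?_)
    rwa [fiber_eq_of_sub_mem (addConGen_moveRel_le_fiberCon S hab)]
  | trans hab _ ih₁ ih₂ =>
    rw [← sub_add_sub_cancel _ (monomial _ (1 : k)) _]
    refine add_mem (ih₁ hu) (ih₂ ?_)
    rwa [← fiber_eq_of_sub_mem (addConGen_moveRel_le_fiberCon S hab)]
  | @add a b c d _ _ ih₁ ih₂ =>
    have hac : monomial (a + c) (1 : k) - monomial (b + d) 1 =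
        monomial c 1 * (monomial a 1 - monomial b 1) +
          monomial b 1 * (monomial c 1 - monomial d 1) := by
      simp only [mul_sub, monomial_mul, mul_one]
      rw [add_comm c a, add_comm c b]
      abel
    rw [hac]
    refine add_mem (Ideal.mul_mem_left _ _ (ih₁ ?_)) (Ideal.mul_mem_left _ _ (ih₂ ?_))
    · exact hP _ _ (by simpa [add_comm] using fiberLE_fiber_add L c a) hu
    · exact hP _ _ (fiberLE_fiber_add L a c) hu

lemma addConGen_moveRel_of_mem_span {S : Set (MvPolynomial ι k)}
    (hS : ∀ f ∈ S, IsLatticeBinomial k L f) {u v : ι →₀ ℕ}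
    (huv : monomial u (1 : k) - monomial v 1 ∈ Ideal.span S) :
    addConGen (moveRel L S) u v := by
  set φ := AddMonoidAlgebra.mapDomainRingHom k (addConGen (moveRel L S)).mk'
  have hφ : ∀ a, φ (monomial a 1) =
      AddMonoidAlgebra.single (a : (addConGen (moveRel L S)).Quotient) 1 := fun a => by
    rw [← single_eq_monomial]
    exact AddMonoidAlgebra.mapDomain_single
  have hker : Ideal.span S ≤ RingHom.ker φ := by
    refine Ideal.span_le.2 fun f hf => ?_
    obtain ⟨a, b, hab, rfl⟩ := hS f hf
    simp only [SetLike.mem_coe, RingHom.mem_ker, map_sub, hφ, sub_eq_zero]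
    rw [AddCon.eq _ |>.2 (AddConGen.Rel.of _ _ ⟨hab, hf⟩)]
  have := hker huv
  simp only [RingHom.mem_ker, map_sub, hφ, sub_eq_zero] at this
  exact (AddCon.eq _).1 (AddMonoidAlgebra.single_left_injective one_ne_zero this)

variable (k) in
/-- `Ideal.span (latticeBinomialsWith k L (fiberLT · F))` is `idealLT k L F` by definition,
and likewise for `idealLE`. -/
def latticeBinomialsWith (L : Submodule ℤ (ι → ℤ))
    (P : Set (ι →₀ ℕ) → Prop) : Set (MvPolynomial ι k) :=
  {f | ∃ u v : ι →₀ ℕ, natVec u - natVec v ∈ L ∧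
    f = monomial u (1 : k) - monomial v 1 ∧ P (fiber L u)}

lemma sub_mem_span_binomialsWith {S : Set (MvPolynomial ι k)}
    (hS : ∀ f ∈ S, IsLatticeBinomial k L f) {P : Set (ι →₀ ℕ) → Prop}
    (hP : ∀ G H, fiberLE G H → P H → P G) {u v : ι →₀ ℕ}
    (huv : monomial u (1 : k) - monomial v 1 ∈ Ideal.span S) (hu : P (fiber L u)) :
    monomial u (1 : k) - monomial v 1 ∈ Ideal.span (binomialsWith L S P) :=
  sub_mem_span_binomialsWith_of_addConGen hP (addConGen_moveRel_of_mem_span hS huv) hu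

lemma span_binomialsWith_eq {S : Set (MvPolynomial ι k)}
    (hS : ∀ f ∈ S, IsLatticeBinomial k L f) (hspan : Ideal.span S = latticeIdeal k L)
    {P : Set (ι →₀ ℕ) → Prop} (hP : ∀ G H, fiberLE G H → P H → P G) :
    Ideal.span (binomialsWith L S P) = Ideal.span (latticeBinomialsWith k L P) := by
  apply le_antisymm
  · exact Ideal.span_mono fun _ ⟨_, a, b, hab, hg, hPa⟩ => ⟨a, b, hab, hg, hPa⟩
  · refine Ideal.span_le.2 fun _ ⟨u, v, huv, hf, hu⟩ => hf ▸ ?_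
    refine sub_mem_span_binomialsWith hS hP ?_ hu
    exact hspan ▸ Ideal.subset_span ⟨u, v, huv, rfl⟩

lemma fiberLE_downward {F : Set (ι →₀ ℕ)} :
    ∀ G H : Set (ι →₀ ℕ), fiberLE G H → fiberLE H F → fiberLE G F :=
  fun _ _ hGH hHF => hGH.trans hHF

lemma fiberLT_downward {F : Set (ι →₀ ℕ)} :
    ∀ G H : Set (ι →₀ ℕ), fiberLE G H → fiberLT H F → fiberLT G F :=
  fun _ _ hGH ⟨hHF, hFH⟩ =>
    ⟨hGH.trans hHF, fun hFG => hFH ⟨hHF, hFG.2.trans hGH⟩⟩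

end Moves

section MarkovBasis

variable {k : Type*} [Field k] {ι : Type*} {L : Submodule ℤ (ι → ℤ)}

variable (k L) in
lemma exists_isMarkovBasis [Finite ι] : ∃ S : Finset (MvPolynomial ι k), IsMarkovBasis k L S := by
  obtain ⟨S, hS, hspan⟩ := (Submodule.fg_span_iff_fg_span_finset_subset _).1
    (IsNoetherian.noetherian (latticeIdeal k L))
  obtain ⟨T, hcard, hT, hTspan⟩ : muIdeal k L ∈ _ :=
    Nat.sInf_mem ⟨S.card, S, rfl, fun f hf => hS hf, hspan.symm⟩
  exact ⟨T, hT, hTspan, hcard⟩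

lemma IsMarkovBasis.notMem_span_erase [DecidableEq (MvPolynomial ι k)]
    {S : Finset (MvPolynomial ι k)} (hS : IsMarkovBasis k L S) {f : MvPolynomial ι k} (hf : f ∈ S) :
    f ∉ Ideal.span (S.erase f : Set (MvPolynomial ι k)) := by
  intro hmem
  have hspan : Ideal.span (S.erase f : Set (MvPolynomial ι k)) = latticeIdeal k L := by
    rw [← hS.2.1]
    conv_rhs => rw [← Finset.insert_erase hf, Finset.coe_insert]
    exact (Submodule.span_insert_eq_span hmem).symm
  have hmu : muIdeal k L ≤ (S.erase f).card :=
    Nat.sInf_le ⟨S.erase f, rfl, fun g hg => hS.1 g (Finset.mem_of_mem_erase hg), hspan⟩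
  rw [Finset.card_erase_of_mem hf, ← hS.2.2] at hmu
  have : 0 < S.card := Finset.card_pos.2 ⟨f, hf⟩
  omega

lemma IsMarkovBasis.zero_notMem {S : Finset (MvPolynomial ι k)} (hS : IsMarkovBasis k L S) :
    (0 : MvPolynomial ι k) ∉ S :=
  fun h => by classical exact hS.notMem_span_erase h (zero_mem _)

lemma exponent_eq_or_eq_of_monomial_sub_eq {u v a b : ι →₀ ℕ}
    (h : monomial u (1 : k) - monomial v 1 = monomial a 1 - monomial b 1) (huv : u ≠ v) :
    a = u ∨ a = v := by
  classical
  by_contra! hne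
  have hab : a ≠ b := by
    rintro rfl
    rw [sub_self, sub_eq_zero, monomial_left_inj one_ne_zero] at h
    exact huv h
  have := congrArg (coeff a) h
  simp [coeff_monomial, hne.1.symm, hne.2.symm, hab.symm] at this

lemma binomialsWith_fiberLT_subset_erase [DecidableEq (MvPolynomial ι k)]
    {S : Finset (MvPolynomial ι k)} {F : Set (ι →₀ ℕ)} {u v : ι →₀ ℕ}
    (huv : natVec u - natVec v ∈ L) (hne : u ≠ v) (hF : fiberLE F (fiber L u)) :
    binomialsWith L (S : Set (MvPolynomial ι k)) (fiberLT · F) ⊆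
      ↑(S.erase (monomial u (1 : k) - monomial v 1)) := by
  rintro _ ⟨hgS, a, b, -, rfl, hlt⟩
  refine Finset.mem_coe.2 <| Finset.mem_erase.2 ⟨fun hg => ?_, hgS⟩
  have ha : fiber L a = fiber L u := by
    rcases exponent_eq_or_eq_of_monomial_sub_eq hg.symm hne with rfl | rfl
    · rfl
    · exact (fiber_eq_of_sub_mem huv).symm
  exact hlt.2 ⟨hlt.1, ha ▸ hF⟩

end MarkovBasis

/-- a fiber `F` is a Markov `I`-fiber (some Markov basis contains a binomial
with fiber equivalent to `F`) iff `I_{<F̄} ≠ I_{≤F̄}`. -/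
theorem stmt10 (k : Type*) [Field k] {n : ℕ} (L : Submodule ℤ (Fin n → ℤ))
    (w : Fin n →₀ ℕ) :
    (∃ S : Finset (MvPolynomial (Fin n) k), IsMarkovBasis k L S ∧
       ∃ f ∈ S, ∃ u v : Fin n →₀ ℕ, natVec u - natVec v ∈ L ∧
         f = monomial u (1 : k) - monomial v 1 ∧ fiberEquiv (fiber L u) (fiber L w)) ↔
    idealLT k L (fiber L w) ≠ idealLE k L (fiber L w) := by
  classical
  constructor
  · rintro ⟨S, hS, f, hfS, u, v, huv, rfl, hequiv⟩ hLT_eq_LE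
    have hne : u ≠ v := by
      rintro rfl
      exact hS.zero_notMem (by simpa using hfS)
    refine hS.notMem_span_erase hfS
      (Ideal.span_mono (binomialsWith_fiberLT_subset_erase huv hne hequiv.2) ?_)
    rw [span_binomialsWith_eq hS.1 hS.2.1 fiberLT_downward]
    change _ ∈ idealLT k L (fiber L w)
    rw [hLT_eq_LE]
    exact Ideal.subset_span ⟨u, v, huv, rfl, hequiv.1⟩
  · intro hLT_ne_LE
    obtain ⟨S, hS⟩ := exists_isMarkovBasis k L
    by_contra! hno
    refine hLT_ne_LE ?_
    change Ideal.span (latticeBinomialsWith k L (fiberLT · (fiber L w))) =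
      Ideal.span (latticeBinomialsWith k L (fiberLE · (fiber L w)))
    rw [← span_binomialsWith_eq hS.1 hS.2.1 fiberLT_downward,
      ← span_binomialsWith_eq hS.1 hS.2.1 fiberLE_downward]
    refine le_antisymm (Ideal.span_mono fun _ ⟨hgS, a, b, hab, hg, hlt⟩ =>
      ⟨hgS, a, b, hab, hg, hlt.1⟩) (Ideal.span_mono ?_)
    rintro _ ⟨hgS, a, b, hab, rfl, hle⟩
    exact ⟨hgS, a, b, hab, rfl, hle, hno S hS _ hgS a b hab rfl⟩
end
end

section
/- Let L ⊆ ℤⁿ be a lattice. If rank(L_pure) > 1, or if rank(L_pure) = 1 and L ≠ L_pure, then the Universal Markov basis of I_L (the union of all Markov bases of I_L) is infinite. -/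
/-!
A Markov basis `S` of `I_L` contains a binomial `f = ±(x^m - 1)` with `0 ≠ m ∈ L⁺`: some
`x^w - 1` with `0 ≠ w ∈ L⁺` lies in `I_L`, so some generator has a nonzero constant term, and
among binomials only these do. Under the rank hypothesis `S` has a second element
`g = x^p - x^q`, for otherwise `I_L = (x^m - 1)`, which forces `L = ℤ m = L_pure`. As
`x^p - x^{q+(t+1)m}` and `x^p - x^{q+tm}` differ by a multiple of `f`, exchanging one for the
other in a Markov basis containing `f` gives again a Markov basis, so the pairwise distinct
binomials `x^p - x^{q+tm}` all belong to Markov bases.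
-/

open MvPolynomial

noncomputable section

section LatticeVectors

variable {ι : Type*}

def natVecHom : (ι →₀ ℕ) →+ (ι → ℤ) where
  toFun := natVec
  map_zero' := by funext i; simp [natVec]
  map_add' u v := by funext i; simp [natVec]

@[simp]
lemma natVecHom_apply (u : ι →₀ ℕ) : natVecHom u = natVec u := rfl

@[simp]
lemma natVec_zero : natVec (0 : ι →₀ ℕ) = 0 := map_zero natVecHom

lemma exists_natVec_eq [Finite ι] {w : ι → ℤ} (hw : 0 ≤ w) :
    ∃ u : ι →₀ ℕ, natVec u = w :=
  ⟨Finsupp.equivFunOnFinite.symm fun i => (w i).toNat,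
    funext fun i => by simpa [natVec] using hw i⟩

lemma exists_natVec_sub_natVec_eq [Finite ι] (l : ι → ℤ) :
    ∃ u v : ι →₀ ℕ, natVec u - natVec v = l :=
  ⟨Finsupp.equivFunOnFinite.symm fun i => (l i).toNat,
    Finsupp.equivFunOnFinite.symm fun i => (-l i).toNat,
    funext fun i => by simp [natVec]⟩

lemma Lpure_le (L : Submodule ℤ (ι → ℤ)) : Lpure L ≤ L :=
  Submodule.span_le.mpr fun _ hw => hw.1

lemma exists_mem_Lplus_ne_zero {L : Submodule ℤ (ι → ℤ)} (h : Lpure L ≠ ⊥) :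
    ∃ w ∈ Lplus L, w ≠ 0 := by
  by_contra! hzero
  exact h (Submodule.span_eq_bot.mpr hzero)

lemma eq_Lpure_of_le_span {L : Submodule ℤ (ι → ℤ)} {w : ι → ℤ} (hw : w ∈ Lplus L)
    (hL : L ≤ ℤ ∙ w) : L = Lpure L :=
  le_antisymm (hL.trans ((Submodule.span_singleton_le_iff_mem _ _).mpr (Submodule.subset_span hw)))
    (Lpure_le L)

lemma finrank_Lpure_le_one_of_le_span {L : Submodule ℤ (ι → ℤ)} {w : ι → ℤ}
    (hL : L ≤ ℤ ∙ w) : Module.finrank ℤ (Lpure L) ≤ 1 :=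
  calc Module.finrank ℤ (Lpure L) ≤ Module.finrank ℤ (ℤ ∙ w) :=
        Submodule.finrank_mono ((Lpure_le L).trans hL)
    _ ≤ 1 := by simpa using finrank_span_le_card (R := ℤ) ({w} : Set (ι → ℤ))

end LatticeVectors

lemma Ideal.span_insert_erase_of_sub_mem {R : Type*} [CommRing R] [DecidableEq R]
    {S : Finset R} {g g' : R} (hg : g ∈ S) (hd : g' - g ∈ Ideal.span (S.erase g : Set R)) :
    Ideal.span (insert g' (S.erase g) : Finset R) = Ideal.span (S : Set R) := by
  have hg'_mem : g' ∈ Ideal.span (insert g (S.erase g : Set R)) := by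
    simpa using Ideal.add_mem _ (Ideal.subset_span (Set.mem_insert g _))
      (Ideal.span_mono (Set.subset_insert g _) hd)
  have hg_mem : g ∈ Ideal.span (insert g' (S.erase g : Set R)) := by
    simpa using Ideal.sub_mem _ (Ideal.subset_span (Set.mem_insert g' _))
      (Ideal.span_mono (Set.subset_insert g' _) hd)
  change Submodule.span R _ = Submodule.span R _
  rw [Finset.coe_insert, ← Submodule.span_insert_eq_span hg_mem, Set.insert_comm,
    Submodule.span_insert_eq_span hg'_mem, ← Finset.coe_insert, Finset.insert_erase hg]

section BinomialIdeals

variable (k : Type*) [Field k] {ι : Type*}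

lemma natVec_sub_mem_span_of_mem_span_binomial {m u v : ι →₀ ℕ}
    (h : monomial u (1 : k) - monomial v 1 ∈ Ideal.span {monomial m (1 : k) - 1}) :
    natVec u - natVec v ∈ ℤ ∙ natVec m := by
  set N := ℤ ∙ natVec m
  -- the monomial map `x^u ↦ [u]` into the group algebra of `ℤ^ι ⧸ ℤ m` kills `x^m - 1`
  let φ : MvPolynomial ι k →ₐ[k] AddMonoidAlgebra k ((ι → ℤ) ⧸ N) :=
    AddMonoidAlgebra.mapDomainAlgHom k k (N.mkQ.toAddMonoidHom.comp natVecHom)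
  have hφ : ∀ w : ι →₀ ℕ,
      φ (monomial w 1) = AddMonoidAlgebra.single (N.mkQ (natVec w)) 1 :=
    fun w => AddMonoidAlgebra.mapDomain_single
  have hm : φ (monomial m (1 : k) - 1) = 0 := by
    have hmN : N.mkQ (natVec m) = 0 :=
      (Submodule.Quotient.mk_eq_zero N).mpr (Submodule.mem_span_singleton_self _)
    rw [map_sub, hφ, map_one, hmN, ← AddMonoidAlgebra.one_def, sub_self]
  obtain ⟨c, hc⟩ := Ideal.mem_span_singleton'.mp h
  have huv : φ (monomial u 1) = φ (monomial v 1) := by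
    rw [← sub_eq_zero, ← map_sub, ← hc, map_mul, hm, mul_zero]
  rw [hφ, hφ] at huv
  exact (Submodule.Quotient.eq N).mp (AddMonoidAlgebra.single_left_injective one_ne_zero huv)

lemma le_span_of_latticeIdeal_le_span_binomial [Finite ι] {L : Submodule ℤ (ι → ℤ)}
    {m : ι →₀ ℕ} (h : latticeIdeal k L ≤ Ideal.span {monomial m (1 : k) - 1}) :
    L ≤ ℤ ∙ natVec m := by
  intro l hl
  obtain ⟨u, v, rfl⟩ := exists_natVec_sub_natVec_eq l
  exact natVec_sub_mem_span_of_mem_span_binomial k (h (Ideal.subset_span ⟨u, v, hl, rfl⟩))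

end BinomialIdeals

def universalMarkovBasis (k : Type*) [Field k] {ι : Type*} (L : Submodule ℤ (ι → ℤ)) :
    Set (MvPolynomial ι k) :=
  {f | ∃ S : Finset (MvPolynomial ι k), IsMarkovBasis k L S ∧ f ∈ S}

section MarkovBases

variable {k : Type*} [Field k] {ι : Type*} {L : Submodule ℤ (ι → ℤ)}

lemma monomial_sub_one_mem_latticeIdeal {m : ι →₀ ℕ} (hm : natVec m ∈ L) :
    monomial m (1 : k) - 1 ∈ latticeIdeal k L :=
  Ideal.subset_span ⟨m, 0, by simpa using hm, rfl⟩

lemma exists_mem_constantCoeff_ne_zero [Finite ι] {S : Finset (MvPolynomial ι k)}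
    (hS : Ideal.span (S : Set (MvPolynomial ι k)) = latticeIdeal k L) {w : ι → ℤ}
    (hw : w ∈ Lplus L) (hw0 : w ≠ 0) : ∃ f ∈ S, constantCoeff f ≠ 0 := by
  obtain ⟨u, rfl⟩ := exists_natVec_eq hw.2
  have hu0 : u ≠ 0 := by
    rintro rfl
    exact hw0 natVec_zero
  by_contra! hS0
  have hle : latticeIdeal k L ≤ RingHom.ker (constantCoeff (R := k) (σ := ι)) :=
    hS ▸ Ideal.span_le.mpr hS0
  have hker := hle (monomial_sub_one_mem_latticeIdeal hw.1)
  classical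
  simp [constantCoeff_monomial, hu0] at hker

lemma IsLatticeBinomial.exists_span_eq_of_constantCoeff_ne_zero {f : MvPolynomial ι k}
    (hf : IsLatticeBinomial k L f) (hc : constantCoeff f ≠ 0) :
    ∃ m : ι →₀ ℕ, m ≠ 0 ∧ natVec m ∈ L ∧
      Ideal.span {f} = Ideal.span {monomial m (1 : k) - 1} := by
  classical
  obtain ⟨u, v, huv, rfl⟩ := hf
  rw [map_sub, constantCoeff_monomial, constantCoeff_monomial] at hc
  by_cases hu : u = 0 <;> by_cases hv : v = 0
  · simp [hu, hv] at hc
  · subst hu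
    refine ⟨v, hv, by simpa using L.neg_mem huv, ?_⟩
    rw [← Ideal.span_singleton_neg, neg_sub]
    rfl
  · subst hv
    exact ⟨u, hu, by simpa using huv, rfl⟩
  · simp [hu, hv] at hc

lemma muIdeal_le_card {T : Finset (MvPolynomial ι k)} (hT : ∀ f ∈ T, IsLatticeBinomial k L f)
    (hspan : Ideal.span (T : Set (MvPolynomial ι k)) = latticeIdeal k L) :
    muIdeal k L ≤ T.card :=
  Nat.sInf_le ⟨T, rfl, hT, hspan⟩

lemma IsMarkovBasis.insert_erase [DecidableEq (MvPolynomial ι k)]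
    {S : Finset (MvPolynomial ι k)} {g g' : MvPolynomial ι k} (hS : IsMarkovBasis k L S)
    (hg : g ∈ S) (hg' : IsLatticeBinomial k L g')
    (hd : g' - g ∈ Ideal.span (S.erase g : Set (MvPolynomial ι k))) :
    IsMarkovBasis k L (insert g' (S.erase g)) ∧ g' ∉ S.erase g := by
  have hbin : ∀ f ∈ insert g' (S.erase g), IsLatticeBinomial k L f := by
    simp only [Finset.mem_insert]
    rintro f (rfl | hf)
    exacts [hg', hS.1 f (Finset.mem_of_mem_erase hf)]
  have hspan := (Ideal.span_insert_erase_of_sub_mem hg hd).trans hS.2.1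
  have hmu := muIdeal_le_card hbin hspan
  rw [← hS.2.2] at hmu
  have hcard := Finset.card_insert_le g' (S.erase g)
  have hpos : 0 < S.card := Finset.card_pos.mpr ⟨g, hg⟩
  rw [Finset.card_erase_of_mem hg] at hcard
  refine ⟨⟨hbin, hspan, by rw [← hS.2.2]; omega⟩, fun hmem => ?_⟩
  rw [Finset.insert_eq_of_mem hmem, Finset.card_erase_of_mem hg] at hmu
  omega

lemma IsMarkovBasis.universalMarkovBasis_infinite [DecidableEq (MvPolynomial ι k)]
    {S : Finset (MvPolynomial ι k)} (hS : IsMarkovBasis k L S) {p q m : ι →₀ ℕ}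
    (hg : monomial p (1 : k) - monomial q 1 ∈ S) (hpq : natVec p - natVec q ∈ L)
    (hmL : natVec m ∈ L) (hm0 : m ≠ 0)
    (hmS : monomial m (1 : k) - 1 ∈
      Ideal.span (S.erase (monomial p 1 - monomial q 1) : Set (MvPolynomial ι k))) :
    (universalMarkovBasis k L).Infinite := by
  set G : ℕ → MvPolynomial ι k := fun t => monomial p 1 - monomial (q + t • m) 1
  have hG : ∀ t, IsLatticeBinomial k L (G t) := fun t => ⟨p, q + t • m, by
    simpa [← natVecHom_apply, sub_add_eq_sub_sub] using L.sub_mem hpq (nsmul_mem hmL t), rfl⟩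
  have hG_succ : ∀ t, G (t + 1) - G t = -monomial (q + t • m) 1 * (monomial m (1 : k) - 1) := by
    intro t
    simp only [G, succ_nsmul, ← add_assoc, neg_mul, mul_sub, monomial_mul, mul_one]
    ring
  have hG_mem : ∀ t, ∃ S : Finset (MvPolynomial ι k), IsMarkovBasis k L S ∧ G t ∈ S ∧
      monomial m (1 : k) - 1 ∈ Ideal.span (S.erase (G t) : Set (MvPolynomial ι k)) := by
    intro t
    induction t with
    | zero => exact ⟨S, hS, by simpa [G] using hg, by simpa [G] using hmS⟩
    | succ t ih =>
      obtain ⟨S, hS, hGS, hmS⟩ := ih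
      obtain ⟨hS', hnot⟩ := hS.insert_erase hGS (hG (t + 1))
        (by rw [hG_succ]; exact Ideal.mul_mem_left _ _ hmS)
      exact ⟨_, hS', Finset.mem_insert_self _ _, by rwa [Finset.erase_insert hnot]⟩
  have hG_inj : Function.Injective G :=
    sub_right_injective.comp <| (monomial_left_injective one_ne_zero).comp <|
      (add_right_injective q).comp (nsmul_left_strictMono (pos_iff_ne_zero.2 hm0)).injective
  exact Set.infinite_of_injective_forall_mem hG_inj fun t =>
    (hG_mem t).imp fun _ hS => ⟨hS.1, hS.2.1⟩

end MarkovBases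

/-- if `rank L_pure > 1`, or `rank L_pure = 1` and `L ≠ L_pure`, then the
Universal Markov basis (the union of all Markov bases) of `I_L` is infinite. -/
theorem stmt15 (k : Type*) [Field k] {n : ℕ} (L : Submodule ℤ (Fin n → ℤ))
    (h : 1 < Module.finrank ℤ ↥(Lpure L) ∨
      (Module.finrank ℤ ↥(Lpure L) = 1 ∧ L ≠ Lpure L)) :
    {f : MvPolynomial (Fin n) k | ∃ S : Finset (MvPolynomial (Fin n) k),
      IsMarkovBasis k L S ∧ f ∈ S}.Infinite := by
  classical
  obtain ⟨S, hS⟩ := exists_isMarkovBasis k L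
  have hpure : Lpure L ≠ ⊥ := by
    rintro hbot
    rw [hbot, finrank_bot] at h
    omega
  obtain ⟨w, hw, hw0⟩ := exists_mem_Lplus_ne_zero hpure
  obtain ⟨f, hfS, hf⟩ := exists_mem_constantCoeff_ne_zero hS.2.1 hw hw0
  obtain ⟨m, hm0, hmL, hfm⟩ := (hS.1 f hfS).exists_span_eq_of_constantCoeff_ne_zero hf
  obtain ⟨g, hgS, hgf⟩ : ∃ g ∈ S, g ≠ f := by
    by_contra! hSf
    have hL : L ≤ ℤ ∙ natVec m := le_span_of_latticeIdeal_le_span_binomial k <| by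
      rw [← hS.2.1, ← hfm, Ideal.span_le]
      exact fun x hx => (hSf x hx).symm ▸ Ideal.mem_span_singleton_self f
    rcases h with h | ⟨-, h⟩
    · exact (finrank_Lpure_le_one_of_le_span hL).not_gt h
    · exact h (eq_Lpure_of_le_span ⟨hmL, fun i => Int.natCast_nonneg _⟩ hL)
  obtain ⟨p, q, hpq, rfl⟩ := hS.1 g hgS
  have hmf : monomial m (1 : k) - 1 ∈ Ideal.span {f} := hfm ▸ Ideal.mem_span_singleton_self _
  refine hS.universalMarkovBasis_infinite hgS hpq hmL hm0 (Ideal.span_mono ?_ hmf)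
  exact Set.singleton_subset_iff.mpr (Finset.mem_erase.mpr ⟨hgf.symm, hfS⟩)
end
end
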